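/- If q = 0, then starting from configuration O, every maximal sequence of legal moves terminates at P = (k,...,k) after exactly t = p·(−min_{1≤i≤p} d_i(O,P)) + Σ_{i=1}^{p} d_i(O,P) moves. -/

import Mathlib

/-- One step of the Game of Cards: player `i` gives a card to player `i+1` (mod `p`). -/
def step (p : ℕ) [NeZero p] (a : Fin p → ℕ) (i : Fin p) : Fin p → ℕ :=
  Function.update (Function.update a i (a i - 1)) (i + 1) (a (i + 1) + 1)

/-- The move at position `i` is legal iff the right neighbour has strictly fewer cards. -/
def legal (p : ℕ) [NeZero p] (a : Fin p → ℕ) (i : Fin p) : Prop := a (i + 1) < a i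

/-- The move relation of the Game of Cards. -/
def Move (p : ℕ) [NeZero p] (a b : Fin p → ℕ) : Prop :=
  ∃ i : Fin p, legal p a i ∧ b = step p a i

/-- `playList p a L b` : playing the (legal) moves recorded in the list `L` of positions,
starting from `a`, ends in `b`. -/
def playList (p : ℕ) [NeZero p] : (Fin p → ℕ) → List (Fin p) → (Fin p → ℕ) → Prop
  | a, [], b => b = a
  | a, i :: L, b => legal p a i ∧ playList p (step p a i) L b

/-- `dvec p a b j` is the `j`-th prefix-sum difference `(a_0+⋯+a_j) - (b_0+⋯+b_j)`. -/
def dvec (p : ℕ) (a b : Fin p → ℕ) (j : Fin p) : ℤ :=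
  ∑ i ∈ Finset.univ.filter (· ≤ j), ((a i : ℤ) - (b i : ℤ))

/-- A configuration is dual iff `p ∤ n` and every entry is `k` or `k+1` where `k = n / p`. -/
def Dual (p n : ℕ) (a : Fin p → ℕ) : Prop :=
  ¬ p ∣ n ∧ ∀ i, a i = n / p ∨ a i = n / p + 1

/-- The last index of `Fin p` (the `p`-th player). -/
def lastIdx (p : ℕ) [NeZero p] : Fin p :=
  ⟨p - 1, Nat.sub_lt (Nat.pos_of_ne_zero (NeZero.ne p)) Nat.one_pos⟩

/-- The list of configurations visited when playing the moves in `L` from `a`. -/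
def trace (p : ℕ) [NeZero p] : (Fin p → ℕ) → List (Fin p) → List (Fin p → ℕ)
  | a, [] => [a]
  | a, i :: L => a :: trace p (step p a i) L

section Helpers
variable (p : ℕ) [NeZero p]
set_option linter.unusedSectionVars false

lemma myval_one (hp : 1 < p) : (1:Fin p).1 = 1 := by rw [Fin.val_one', Nat.mod_eq_of_lt hp]

lemma mysub_one (a : Fin p) (h : a ≠ 0) : (a-1).1 = a.1 - 1 := by
  have h2 := a.2
  have h0 : a.1 ≠ 0 := fun hh => h (Fin.ext hh)
  have hp : 1 < p := by omega
  rw [Fin.coe_sub, myval_one p hp]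
  have e : p - 1 + a.1 = (a.1 - 1) + p := by omega
  rw [e, Nat.add_mod_right, Nat.mod_eq_of_lt (by omega)]

lemma myzero_sub_one : ((0:Fin p) - 1).1 = p - 1 := by
  have hp := Nat.pos_of_ne_zero (NeZero.ne p)
  rcases Nat.lt_or_ge 1 p with hp2 | hp2
  · rw [Fin.coe_sub, myval_one p hp2, Fin.val_zero, Nat.add_zero, Nat.mod_eq_of_lt (by omega)]
  · interval_cases p; rfl

lemma myadd_one (i : Fin p) (h : i.1 + 1 < p) : (i+1).1 = i.1+1 := by
  rw [Fin.val_add, myval_one p (by omega), Nat.mod_eq_of_lt (by omega)]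

lemma myadd_one_last (i : Fin p) (h : i.1 = p - 1) : (i+1).1 = 0 := by
  have h2 := i.2
  rcases Nat.lt_or_ge 1 p with hp2 | hp2
  · rw [Fin.val_add, myval_one p hp2, h]
    have e : p - 1 + 1 = p := by omega
    rw [e, Nat.mod_self]
  · have hp1 : p = 1 := by omega
    subst hp1
    exact Nat.lt_one_iff.mp (i+1).2

lemma count_sum (L : List (Fin p)) : ∑ j : Fin p, (L.count j : ℤ) = L.length := by
  induction L with
  | nil => simp
  | cons a L ih =>
    have : ∀ j : Fin p, ((a :: L).count j : ℤ) = L.count j + if j = a then 1 else 0 := by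
      intro j; rw [List.count_cons]
      rcases eq_or_ne j a with rfl | hja
      · simp
      · simp [hja, Ne.symm hja]
    simp only [this, Finset.sum_add_distrib, ih, Finset.sum_ite_eq', Finset.mem_univ, if_true]
    simp [add_comm]

variable {p}

lemma legal_succ_ne {a : Fin p → ℕ} {i : Fin p} (hl : legal p a i) : i + 1 ≠ i := by
  intro hh; unfold legal at hl; rw [hh] at hl; exact lt_irrefl _ hl

lemma step_nat {a : Fin p → ℕ} {i : Fin p} (hl : legal p a i) (x : Fin p) :
    step p a i x = if x = i + 1 then a (i+1) + 1 else if x = i then a i - 1 else a x := by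
  have hne := legal_succ_ne hl
  unfold step
  rcases eq_or_ne x (i+1) with rfl | hx1
  · simp
  · rw [Function.update_of_ne hx1, if_neg hx1]
    rcases eq_or_ne x i with rfl | hx2
    · simp
    · rw [Function.update_of_ne hx2, if_neg hx2]

lemma step_int {a : Fin p → ℕ} {i : Fin p} (hl : legal p a i) (x : Fin p) :
    ((step p a i x : ℤ)) = a x + (if x = i+1 then 1 else 0) - (if x = i then 1 else 0) := by
  have hne := legal_succ_ne hl
  have h1 : 1 ≤ a i := Nat.lt_of_le_of_lt (Nat.zero_le _) hl
  rw [step_nat hl]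
  rcases eq_or_ne x (i+1) with rfl | hx1
  · simp only [if_pos rfl, if_neg hne]; push_cast; ring
  · rw [if_neg hx1, if_neg hx1]
    rcases eq_or_ne x i with rfl | hx2
    · rw [if_pos rfl, if_pos rfl]
      have : ((a x - 1 : ℕ) : ℤ) = (a x : ℤ) - 1 := by
        rw [Nat.cast_sub h1]; norm_num
      rw [this]; ring
    · rw [if_neg hx2, if_neg hx2]; ring

lemma sum_step {a : Fin p → ℕ} {i : Fin p} (hl : legal p a i) :
    ∑ x, step p a i x = ∑ x, a x := by
  have : ((∑ x, step p a i x : ℕ) : ℤ) = ((∑ x, a x : ℕ) : ℤ) := by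
    push_cast
    simp only [step_int hl]
    rw [Finset.sum_sub_distrib, Finset.sum_add_distrib]
    rw [Finset.sum_ite_eq' Finset.univ (i+1) (fun _ => (1:ℤ)),
        Finset.sum_ite_eq' Finset.univ i (fun _ => (1:ℤ))]
    simp
  exact_mod_cast this

lemma le_lastIdx (x : Fin p) : x ≤ lastIdx p := by
  have := x.2
  show x.1 ≤ p - 1
  omega

lemma eq_lastIdx_of_ge {x : Fin p} (h : lastIdx p ≤ x) : x = lastIdx p :=
  le_antisymm (le_lastIdx x) h

lemma dvec_last {k : ℕ} {O : Fin p → ℕ} (h : ∑ i, O i = k * p) :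
    dvec p O (fun _ => k) (lastIdx p) = 0 := by
  unfold dvec
  rw [Finset.filter_true_of_mem (fun x _ => le_lastIdx x)]
  rw [Finset.sum_sub_distrib, Finset.sum_const, Finset.card_univ, Fintype.card_fin]
  have h' : ∑ i, (O i : ℤ) = (k : ℤ) * p := by
    have := congrArg (Nat.cast : ℕ → ℤ) h
    push_cast at this
    simpa using this
  rw [h', nsmul_eq_mul]
  push_cast
  ring

lemma filter_le_eq_insert {i : Fin p} (hi : i ≠ 0) :
    Finset.univ.filter (· ≤ i) = insert i (Finset.univ.filter (· ≤ i - 1)) := by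
  have h0 : i.1 ≠ 0 := fun hh => hi (Fin.ext hh)
  ext x
  simp only [Finset.mem_filter, Finset.mem_univ, true_and, Finset.mem_insert]
  constructor
  · intro hx
    rcases eq_or_ne x i with rfl | hne
    · exact Or.inl rfl
    · right
      show x.1 ≤ (i-1).1
      rw [mysub_one p i hi]
      have : x.1 ≠ i.1 := fun hh => hne (Fin.ext hh)
      have hx' : x.1 ≤ i.1 := hx
      omega
  · rintro (rfl | hx)
    · exact le_refl _
    · have hx' : x.1 ≤ (i-1).1 := hx
      rw [mysub_one p i hi] at hx'
      show x.1 ≤ i.1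
      omega

lemma dvec_diff {k : ℕ} {O : Fin p → ℕ} {i : Fin p} (hi : i ≠ 0) :
    dvec p O (fun _ => k) i = dvec p O (fun _ => k) (i - 1) + ((O i : ℤ) - k) := by
  unfold dvec
  rw [filter_le_eq_insert hi, Finset.sum_insert]
  · ring
  · simp only [Finset.mem_filter, Finset.mem_univ, true_and]
    intro hc
    have hc' : i.1 ≤ (i-1).1 := hc
    have h0 : i.1 ≠ 0 := fun hh => hi (Fin.ext hh)
    rw [mysub_one p i hi] at hc'
    omega

lemma zero_sub_one_eq_last : ((0 : Fin p) - 1) = lastIdx p :=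
  Fin.ext (myzero_sub_one p)

lemma dvec_zero {k : ℕ} {O : Fin p → ℕ} :
    dvec p O (fun _ => k) 0 = (O 0 : ℤ) - k := by
  unfold dvec
  have : Finset.univ.filter (· ≤ (0:Fin p)) = {0} := by
    ext x
    simp only [Finset.mem_filter, Finset.mem_univ, true_and, Finset.mem_singleton]
    constructor
    · intro hx
      have : x.1 ≤ (0:Fin p).1 := hx
      exact Fin.ext (by simpa using this)
    · rintro rfl; exact le_refl _
  rw [this, Finset.sum_singleton]

lemma dvec_key {k : ℕ} {O : Fin p → ℕ} (h : ∑ i, O i = k * p) (i : Fin p) :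
    (O i : ℤ) = k + dvec p O (fun _ => k) i - dvec p O (fun _ => k) (i - 1) := by
  rcases eq_or_ne i 0 with rfl | hi
  · rw [zero_sub_one_eq_last, dvec_last h, dvec_zero]; ring
  · rw [dvec_diff hi]; ring

end Helpers

section Main
variable {p k : ℕ} [NeZero p]
set_option linter.unusedSectionVars false

lemma dvec_step_sub {a : Fin p → ℕ} {i : Fin p} (hl : legal p a i) (j : Fin p) :
    dvec p (step p a i) (fun _ => k) j = dvec p a (fun _ => k) j +
      ((if i+1 ≤ j then (1:ℤ) else 0) - (if i ≤ j then 1 else 0)) := by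
  unfold dvec
  simp only [step_int hl]
  have expand : ∀ x : Fin p,
      ((a x : ℤ) + (if x = i+1 then 1 else 0) - (if x = i then 1 else 0)) - (k:ℤ)
      = ((a x : ℤ) - k) + ((if x = i+1 then (1:ℤ) else 0) - (if x = i then 1 else 0)) := by
    intro x; ring
  simp only [expand]
  rw [Finset.sum_add_distrib, Finset.sum_sub_distrib, Finset.sum_sub_distrib,
      Finset.sum_ite_eq' _ (i+1) (fun _ => (1:ℤ)), Finset.sum_ite_eq' _ i (fun _ => (1:ℤ))]
  simp only [Finset.mem_filter, Finset.mem_univ, true_and]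

lemma dvec_step_ne_last {a : Fin p → ℕ} {i : Fin p} (hl : legal p a i) (hi : i ≠ lastIdx p)
    (j : Fin p) :
    dvec p (step p a i) (fun _ => k) j = dvec p a (fun _ => k) j - (if j = i then 1 else 0) := by
  rw [dvec_step_sub hl]
  have hi' : i.1 ≠ p - 1 := fun hh => hi (Fin.ext hh)
  have h2 := i.2
  have hv : (i+1).1 = i.1 + 1 := myadd_one p i (by omega)
  have e1 : (i+1 ≤ j) ↔ i.1+1 ≤ j.1 := by rw [Fin.le_def, hv]
  have e2 : (i ≤ j) ↔ i.1 ≤ j.1 := Fin.le_def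
  have e3 : (j = i) ↔ j.1 = i.1 := Fin.ext_iff
  simp only [e1, e2, e3]
  split_ifs <;> omega

lemma dvec_step_last {a : Fin p → ℕ} (hl : legal p a (lastIdx p)) (j : Fin p) :
    dvec p (step p a (lastIdx p)) (fun _ => k) j
      = dvec p a (fun _ => k) j + (if j = lastIdx p then 0 else 1) := by
  rw [dvec_step_sub hl]
  have hv : (lastIdx p + 1).1 = 0 := myadd_one_last p _ rfl
  have h2 := j.2
  have e1 : (lastIdx p + 1 ≤ j) ↔ True := by
    simp only [Fin.le_def, hv, iff_true]; omega
  have e2 : (lastIdx p ≤ j) ↔ j = lastIdx p := by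
    rw [Fin.le_def, Fin.ext_iff]
    show p - 1 ≤ j.1 ↔ j.1 = p - 1
    omega
  simp only [e1, e2, if_true]
  split_ifs <;> omega

lemma playList_sum : ∀ (L : List (Fin p)) (O b : Fin p → ℕ), playList p O L b →
    ∑ x, b x = ∑ x, O x := by
  intro L
  induction L with
  | nil => intro O b hb; rw [show b = O from hb]
  | cons i L ih =>
    intro O b hb
    obtain ⟨hl, h2⟩ := hb
    rw [ih _ _ h2, sum_step hl]

lemma terminal_const {c : Fin p → ℕ} (hterm : ∀ j, ¬ legal p c j)
    (hsum : ∑ x, c x = k * p) : c = fun _ => k := by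
  have mono : ∀ x : Fin p, c x ≤ c (x+1) := fun x => Nat.le_of_not_lt (hterm x)
  open Fin.NatCast in
  have stepn : ∀ (n : ℕ) (x : Fin p), c x ≤ c (x + (n : Fin p)) := by
    intro n
    induction n with
    | zero => intro x; simp
    | succ n ih =>
      intro x
      have : ((n+1 : ℕ) : Fin p) = (n : Fin p) + 1 := Nat.cast_add_one n
      rw [this, ← add_assoc]
      exact le_trans (ih x) (mono (x + (n : Fin p)))
  open Fin.NatCast in
  have all : ∀ x y : Fin p, c x ≤ c y := by
    intro x y
    have h1 := stepn ((y - x).1) x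
    rwa [Fin.cast_val_eq_self, add_comm, sub_add_cancel] at h1
  have hconst : ∀ x : Fin p, c x = c 0 := fun x => le_antisymm (all x 0) (all 0 x)
  have hs : ∑ x : Fin p, c x = p * c 0 := by
    rw [Finset.sum_congr rfl (fun x _ => hconst x)]
    simp [Finset.card_univ, mul_comm]
  have : p * c 0 = p * k := by rw [← hs, hsum, mul_comm]
  have hc0 : c 0 = k := Nat.eq_of_mul_eq_mul_left (Nat.pos_of_ne_zero (NeZero.ne p)) this
  funext x
  rw [hconst x, hc0]

lemma count_cons_int (i x : Fin p) (L : List (Fin p)) :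
    (((i :: L).count x : ℕ) : ℤ) = (L.count x : ℤ) + if x = i then 1 else 0 := by
  rw [List.count_cons]
  rcases eq_or_ne x i with rfl | hxi
  · simp
  · simp [hxi, Ne.symm hxi]

lemma invariant : ∀ (L : List (Fin p)) (O : Fin p → ℕ) (m : ℤ), (∑ i, O i = k * p) →
    (∀ j, m ≤ dvec p O (fun _ => k) j) → ∀ b, playList p O L b →
    (∀ x : Fin p, (b x : ℤ) = (O x : ℤ) + (L.count (x-1) : ℤ) - (L.count x : ℤ)) ∧
    (∀ j, (L.count j : ℤ) ≤ dvec p O (fun _ => k) j - m) := by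
  intro L
  induction L with
  | nil =>
    intro O m h hm b hb
    rw [show b = O from hb]
    constructor
    · intro x; simp
    · intro j; simp; linarith [hm j]
  | cons i L ih =>
    intro O m h hm b hb
    obtain ⟨hl, h2⟩ := hb
    have h' : ∑ x, step p O i x = k * p := by rw [sum_step hl, h]
    have hli : (O (i+1) : ℤ) + 1 ≤ (O i : ℤ) := by exact_mod_cast hl
    have k1 := dvec_key (k := k) h i
    have k2 := dvec_key (k := k) h (i+1)
    rw [show i + 1 - 1 = i by rw [add_sub_cancel_right]] at k2
    -- legality gives: dvec at i is at least m + 1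
    have ei : m + 1 ≤ dvec p O (fun _ => k) i := by
      have := hm (i+1)
      have := hm (i-1)
      linarith
    rcases eq_or_ne i (lastIdx p) with rfl | hilast
    · -- move at the last position
      have hmlt : m ≤ -1 := by
        have hlast := dvec_last (p := p) (k := k) h
        linarith [ei, hlast]
      have hm' : ∀ j, m + 1 ≤ dvec p (step p O (lastIdx p)) (fun _ => k) j := by
        intro j
        rw [dvec_step_last hl]
        rcases eq_or_ne j (lastIdx p) with rfl | hj
        · rw [if_pos rfl, dvec_last h]
          linarith
        · rw [if_neg hj]
          linarith [hm j]
      obtain ⟨ihA, ihB⟩ := ih (step p O (lastIdx p)) (m+1) h' hm' b h2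
      constructor
      · intro x
        rw [ihA x, count_cons_int, count_cons_int, step_int hl]
        have hiff : (x - 1 = lastIdx p) ↔ (x = lastIdx p + 1) := by
          rw [sub_eq_iff_eq_add, add_comm]
        simp only [hiff]
        ring
      · intro j
        rw [count_cons_int]
        have hB := ihB j
        rw [dvec_step_last hl] at hB
        rcases eq_or_ne j (lastIdx p) with rfl | hj
        · rw [if_pos rfl] at hB ⊢
          have hne : ¬ (lastIdx p : Fin p) = lastIdx p + 1 := by
            intro hh
            exact legal_succ_ne hl hh.symm
          linarith
        · rw [if_neg hj] at hB ⊢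
          linarith
    · -- move at a non-last position
      have hm' : ∀ j, m ≤ dvec p (step p O i) (fun _ => k) j := by
        intro j
        rw [dvec_step_ne_last hl hilast]
        rcases eq_or_ne j i with rfl | hj
        · rw [if_pos rfl]; linarith
        · rw [if_neg hj]; linarith [hm j]
      obtain ⟨ihA, ihB⟩ := ih (step p O i) m h' hm' b h2
      constructor
      · intro x
        rw [ihA x, count_cons_int, count_cons_int, step_int hl]
        have hiff : (x - 1 = i) ↔ (x = i + 1) := by
          rw [sub_eq_iff_eq_add, add_comm]
        simp only [hiff]
        ring
      · intro j
        rw [count_cons_int]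
        have hB := ihB j
        rw [dvec_step_ne_last hl hilast] at hB
        rcases eq_or_ne j i with rfl | hj
        · rw [if_pos rfl] at hB ⊢; linarith
        · rw [if_neg hj] at hB ⊢; linarith

end Main

section Final
variable {p k : ℕ} [NeZero p]
set_option linter.unusedSectionVars false

lemma playList_append : ∀ (L1 : List (Fin p)) (a b c : Fin p → ℕ),
    playList p a L1 b → playList p b L2 c → playList p a (L1 ++ L2) c := by
  intro L1
  induction L1 with
  | nil =>
    intro a b c h1 h2
    rw [show b = a from h1] at h2
    exact h2
  | cons i L ih =>
    intro a b c h1 h2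
    obtain ⟨hl, h1'⟩ := h1
    exact ⟨hl, ih _ _ _ h1' h2⟩

/-- If `q = 0`, every maximal play from `O` terminates at `P = (k,…,k)` after exactly
`t = p·(−min_i d_i(O,P)) + Σ_i d_i(O,P)` moves. -/
theorem stmt15 (p k : ℕ) [NeZero p] (O : Fin p → ℕ) (h : ∑ i, O i = k * p)
    (m : ℤ) (hm : ∀ j, m ≤ dvec p O (fun _ => k) j)
    (hm' : ∃ j, dvec p O (fun _ => k) j = m) :
    (¬ ∃ f : ℕ → Fin p → ℕ, f 0 = O ∧ ∀ t, Move p (f t) (f (t + 1))) ∧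
    ∀ (L : List (Fin p)) (c : Fin p → ℕ), playList p O L c → (∀ j, ¬ legal p c j) →
      c = (fun _ => k) ∧
      (L.length : ℤ) = p * (-m) + ∑ j : Fin p, dvec p O (fun _ => k) j := by
  constructor
  · rintro ⟨f, hf0, hfm⟩
    choose g hg1 hg2 using hfm
    have hplay : ∀ t : ℕ, playList p O ((List.range t).map g) (f t) := by
      intro t
      induction t with
      | zero => simpa [playList] using hf0
      | succ t ih =>
        rw [List.range_succ, List.map_append]
        exact playList_append _ _ _ _ ih ⟨hg1 t, hg2 t⟩
    have hbound : ∀ t : ℕ, (t : ℤ) ≤ ∑ j : Fin p, (dvec p O (fun _ => k) j - m) := by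
      intro t
      have hinv := (invariant ((List.range t).map g) O m h hm (f t) (hplay t)).2
      have hlen : ((((List.range t).map g).length : ℕ) : ℤ) = (t : ℤ) := by
        simp
      rw [← hlen, ← count_sum p]
      exact Finset.sum_le_sum (fun j _ => hinv j)
    set B : ℤ := ∑ j : Fin p, (dvec p O (fun _ => k) j - m) with hB
    have h1 := hbound (B.toNat + 1)
    have h2 : (0:ℤ) ≤ B := le_trans (by positivity) (hbound 0)
    omega
  · intro L c hplay hterm
    have hsum_c : ∑ x, c x = k * p := by rw [playList_sum L O c hplay, h]
    have hck : c = fun _ => k := terminal_const hterm hsum_c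
    obtain ⟨ihA, ihB⟩ := invariant L O m h hm c hplay
    obtain ⟨j₀, hj₀⟩ := hm'
    have cnt0 : (L.count j₀ : ℤ) = 0 := by
      have h1 := ihB j₀
      rw [hj₀] at h1
      have h2 : (0:ℤ) ≤ (L.count j₀ : ℤ) := Int.natCast_nonneg _
      omega
    have hgg : ∀ x : Fin p, (L.count x : ℤ) - dvec p O (fun _ => k) x
        = (L.count (x-1) : ℤ) - dvec p O (fun _ => k) (x-1) := by
      intro x
      have h1 := ihA x
      rw [hck] at h1
      have h2 := dvec_key (k := k) h x
      simp only at h1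
      linarith
    open Fin.NatCast in
    have hconst : ∀ x : Fin p, (L.count x : ℤ) - dvec p O (fun _ => k) x
        = (L.count (0:Fin p) : ℤ) - dvec p O (fun _ => k) 0 := by
      have hnat : ∀ n : ℕ, (L.count ((n : Fin p)) : ℤ) - dvec p O (fun _ => k) (n : Fin p)
          = (L.count (0:Fin p) : ℤ) - dvec p O (fun _ => k) 0 := by
        intro n
        induction n with
        | zero => simp
        | succ n ih =>
          have hc : ((n+1 : ℕ) : Fin p) = (n : Fin p) + 1 := Nat.cast_add_one n
          rw [hc]
          have := hgg ((n : Fin p) + 1)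
          rw [show (n : Fin p) + 1 - 1 = (n : Fin p) by rw [add_sub_cancel_right]] at this
          rw [this, ih]
      intro x
      have := hnat x.1
      rwa [Fin.cast_val_eq_self] at this
    have hval : ∀ x : Fin p, (L.count x : ℤ) = dvec p O (fun _ => k) x - m := by
      intro x
      have h1 := hconst x
      have h2 := hconst j₀
      rw [cnt0, hj₀] at h2
      linarith
    refine ⟨hck, ?_⟩
    rw [← count_sum p L]
    rw [Finset.sum_congr rfl (fun x _ => hval x), Finset.sum_sub_distrib, Finset.sum_const,
        Finset.card_univ, Fintype.card_fin, nsmul_eq_mul]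
    push_cast
    ring

end Final
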